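/- Let π be a group, R a commutative ring, A = R[π], and let ∂₁, …, ∂_m be left Fox derivatives in A (m ≥ 1). Let p : A → Ǎ = A/A' be the projection and let Δ̌_{∂ᵢ} : Ǎ → A be the map induced by Δ_{∂ᵢ} (which vanishes on A'). Then the m-linear map μ^m : Ǎ^m → Ǎ defined by μ^m(x₁, …, x_m) = p( Δ̌_{∂₁}(x₁) · Δ̌_{∂₂}(x₂) ⋯ Δ̌_{∂_m}(x_m) ) is an m-brace in A: for each index i and each fixed choice of the other m−1 arguments, the induced endomorphism of Ǎ is induced by a derivation of A. -/

import Mathlib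

/-!
Fix all arguments but the `i`-th and let `P`, `Q` be the products of the factors before
and after it. Modulo commutators `P · Δ(a) · Q ≡ Δ(a) · c` with `c = Q P`. The linear
extension of `g ↦ Σ_a (g/a)_∂ · a c a⁻¹ · g` is a derivation of `R[G]`: this is the Fox
rule for `∂`, combined with `Σ_a u_a · a c a⁻¹` being conjugation-equivariant in `u`.
Modulo commutators `a c a⁻¹ g ≡ (a⁻¹ g a) c`, so this derivation induces `Δ(·) · c`
on `Ǎ`.
-/

open MonoidAlgebra

theorem List.prod_ofFn_update {M : Type*} [Monoid M] {m : ℕ} (f : Fin m → M) (i : Fin m)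
    (y : M) :
    (List.ofFn (Function.update f i y)).prod
      = ((List.ofFn f).take i).prod * y * ((List.ofFn f).drop (i + 1)).prod := by
  have hset : List.ofFn (Function.update f i y) = (List.ofFn f).set i y := by
    refine List.ext_getElem (by simp) fun j h₁ h₂ => ?_
    simp only [List.getElem_ofFn, List.getElem_set, Function.update_apply, Fin.ext_iff,
      eq_comm (a := (i : ℕ))]
  simp [hset, List.prod_set]

abbrev commutatorSubmodule (R A : Type*) [Ring R] [Ring A] [Module R A] : Submodule R A :=
  Submodule.span R {z : A | ∃ u v : A, z = u * v - v * u}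

theorem commutatorSubmodule.mk_mul_comm {R A : Type*} [Ring R] [Ring A] [Module R A]
    (u v : A) :
    (Submodule.Quotient.mk (u * v) : A ⧸ commutatorSubmodule R A)
      = Submodule.Quotient.mk (v * u) :=
  (Submodule.Quotient.eq _).2 (Submodule.subset_span ⟨u, v, rfl⟩)

namespace MonoidAlgebra

section LinearLift

variable {R G M : Type*} [CommSemiring R] [AddCommMonoid M] [Module R M]

variable (R) in
noncomputable def linearLift (f : G → M) : R[G] →ₗ[R] M :=
  Finsupp.linearCombination R f ∘ₗ (coeffLinearEquiv R).toLinearMap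

theorem linearLift_apply (f : G → M) (u : R[G]) :
    linearLift R f u = u.coeff.sum fun g r => r • f g :=
  Finsupp.linearCombination_apply R u.coeff

variable [MulOneClass G]

@[simp]
theorem linearLift_of (f : G → M) (g : G) : linearLift R f (of R G g) = f g := by
  simp [linearLift_apply]

theorem linearMap_ext_of {φ ψ : R[G] →ₗ[R] M} (h : ∀ g, φ (of R G g) = ψ (of R G g)) :
    φ = ψ :=
  lhom_ext' fun g => LinearMap.ext fun r => by
    simp only [LinearMap.comp_apply, lsingle_apply, ← smul_of, map_smul, h]

end LinearLift

theorem leibniz_of_leibniz_on_of {R G : Type*} [CommSemiring R] [Monoid G]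
    (d : R[G] →ₗ[R] R[G])
    (h : ∀ g g' : G,
      d (of R G g * of R G g') = d (of R G g) * of R G g' + of R G g * d (of R G g'))
    (u v : R[G]) : d (u * v) = d u * v + u * d v := by
  induction u using MonoidAlgebra.induction_on with
  | of g =>
    induction v using MonoidAlgebra.induction_on with
    | of g' => exact h g g'
    | add x y hx hy => simp only [mul_add, map_add, hx, hy]; abel
    | smul r x hx => simp only [mul_smul_comm, map_smul, hx, smul_add]
  | add x y hx hy => simp only [add_mul, map_add, hx, hy]; abel
  | smul r x hx => simp only [smul_mul_assoc, map_smul, hx, smul_add]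

section Fox

variable {R G : Type*} [CommSemiring R] [Group G]

def IsFoxDerivative (D : R[G] →ₗ[R] R[G]) : Prop :=
  ∀ x y : G, D (of R G x * of R G y) = D (of R G x) + of R G x * D (of R G y)

noncomputable def conjSum (c : R[G]) : R[G] →ₗ[R] R[G] :=
  linearLift R fun a => of R G a * c * of R G a⁻¹

theorem conjSum_of_mul (c : R[G]) (g : G) (u : R[G]) :
    conjSum c (of R G g * u) = of R G g * conjSum c u * of R G g⁻¹ := by
  induction u using MonoidAlgebra.induction_on with
  | of h =>
    simp only [conjSum, ← map_mul, linearLift_of, mul_inv_rev]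
    simp only [map_mul]
    noncomm_ring
  | add x y hx hy => simp only [mul_add, add_mul, map_add, hx, hy]
  | smul r x hx => simp only [mul_smul_comm, smul_mul_assoc, map_smul, hx]

noncomputable def foxConjDerivation (D : R[G] →ₗ[R] R[G]) (c : R[G]) : R[G] →ₗ[R] R[G] :=
  linearLift R fun g => conjSum c (D (of R G g)) * of R G g

theorem foxConjDerivation_mul {D : R[G] →ₗ[R] R[G]} (hD : IsFoxDerivative D) (c u v : R[G]) :
    foxConjDerivation D c (u * v)
      = foxConjDerivation D c u * v + u * foxConjDerivation D c v := by
  refine leibniz_of_leibniz_on_of _ (fun g h => ?_) u v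
  have hinv : of R G g⁻¹ * of R G g = 1 := by rw [← map_mul, inv_mul_cancel, map_one]
  simp only [foxConjDerivation, ← map_mul, linearLift_of]
  rw [map_mul, hD, map_add, conjSum_of_mul]
  calc (conjSum c (D (of R G g)) + of R G g * conjSum c (D (of R G h)) * of R G g⁻¹)
          * (of R G g * of R G h)
        = conjSum c (D (of R G g)) * of R G g * of R G h
          + of R G g * (conjSum c (D (of R G h)) * (of R G g⁻¹ * of R G g) * of R G h) := by
          noncomm_ring
    _ = _ := by rw [hinv, mul_one]

/-- The map `Δ_∂ : g ↦ Σ_a (g/a)_∂ · a⁻¹ g a`. -/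
noncomputable def foxDelta (D : R[G] →ₗ[R] R[G]) : R[G] →ₗ[R] R[G] :=
  linearLift R fun g => linearLift R (fun a => of R G (a⁻¹ * g * a)) (D (of R G g))

end Fox

section ModCommutators

variable {R G : Type*} [CommRing R] [Group G]

theorem mk_conjSum_mul_of (c b : R[G]) (g : G) :
    (Submodule.Quotient.mk (conjSum c b * of R G g) : R[G] ⧸ commutatorSubmodule R R[G])
      = Submodule.Quotient.mk (linearLift R (fun a => of R G (a⁻¹ * g * a)) b * c) := by
  induction b using MonoidAlgebra.induction_on with
  | of a =>
    calc (Submodule.Quotient.mk (conjSum c (of R G a) * of R G g) : R[G] ⧸ _)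
        = Submodule.Quotient.mk (of R G a * (c * of R G a⁻¹ * of R G g)) := by
          simp only [conjSum, linearLift_of, mul_assoc]
      _ = Submodule.Quotient.mk (c * of R G (a⁻¹ * g * a)) := by
          rw [commutatorSubmodule.mk_mul_comm]; simp only [map_mul, mul_assoc]
      _ = _ := by rw [commutatorSubmodule.mk_mul_comm, linearLift_of]
  | add x y hx hy => simp only [map_add, add_mul, Submodule.Quotient.mk_add, hx, hy]
  | smul r x hx => simp only [map_smul, smul_mul_assoc, Submodule.Quotient.mk_smul, hx]

theorem mk_foxConjDerivation (D : R[G] →ₗ[R] R[G]) (c u : R[G]) :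
    (Submodule.Quotient.mk (foxConjDerivation D c u) : R[G] ⧸ commutatorSubmodule R R[G])
      = Submodule.Quotient.mk (foxDelta D u * c) := by
  induction u using MonoidAlgebra.induction_on with
  | of g =>
    simp only [foxConjDerivation, foxDelta, linearLift_of]
    exact mk_conjSum_mul_of c (D (of R G g)) g
  | add x y hx hy => simp only [map_add, add_mul, Submodule.Quotient.mk_add, hx, hy]
  | smul r x hx => simp only [map_smul, smul_mul_assoc, Submodule.Quotient.mk_smul, hx]

end ModCommutators

end MonoidAlgebra

theorem stmt8_general (R : Type*) [CommRing R] (G : Type*) [Group G] (m : ℕ)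
    (D : Fin m → (MonoidAlgebra R G →ₗ[R] MonoidAlgebra R G))
    (hFox : ∀ (i : Fin m) (x y : G),
      D i (MonoidAlgebra.of R G x * MonoidAlgebra.of R G y)
        = D i (MonoidAlgebra.of R G x) + MonoidAlgebra.of R G x * D i (MonoidAlgebra.of R G y))
    (Δ : Fin m → (MonoidAlgebra R G →ₗ[R] MonoidAlgebra R G))
    (hΔ : ∀ (i : Fin m) (x : G), Δ i (MonoidAlgebra.of R G x)
        = (D i (MonoidAlgebra.of R G x)).coeff.sum
            (fun a r => r • MonoidAlgebra.of R G (a⁻¹ * x * a)))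
    (A' : Submodule R (MonoidAlgebra R G))
    (hA' : A' = Submodule.span R
      {z : MonoidAlgebra R G | ∃ u v : MonoidAlgebra R G, z = u * v - v * u})
    (Δbar : Fin m → ((MonoidAlgebra R G ⧸ A') →ₗ[R] MonoidAlgebra R G))
    (hΔbar : ∀ (i : Fin m) (a : MonoidAlgebra R G),
      Δbar i (Submodule.Quotient.mk a) = Δ i a) :
    ∀ (i : Fin m) (x : Fin m → (MonoidAlgebra R G ⧸ A')),
      ∃ d : MonoidAlgebra R G →ₗ[R] MonoidAlgebra R G,
        (∀ u v : MonoidAlgebra R G, d (u * v) = d u * v + u * d v) ∧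
        ∀ a : MonoidAlgebra R G,
          (Submodule.Quotient.mk (d a) : MonoidAlgebra R G ⧸ A')
            = Submodule.Quotient.mk
                (List.ofFn (fun j =>
                  Δbar j (Function.update x i (Submodule.Quotient.mk a) j))).prod := by
  obtain rfl : A' = commutatorSubmodule R R[G] := hA'
  intro i x
  have hΔ_eq : Δ i = foxDelta (D i) := linearMap_ext_of fun g => by
    rw [hΔ, foxDelta, linearLift_of, linearLift_apply]
  set y := List.ofFn fun j => Δbar j (x j)
  refine ⟨foxConjDerivation (D i) ((y.drop (i + 1)).prod * (y.take i).prod),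
    foxConjDerivation_mul (hFox i) _, fun a => ?_⟩
  have hupdate : (fun j => Δbar j (Function.update x i (Submodule.Quotient.mk a) j))
      = Function.update (fun j => Δbar j (x j)) i (Δ i a) := by
    ext1 j; rw [Function.apply_update (fun j => Δbar j), hΔbar]
  rw [hupdate, List.prod_ofFn_update, mk_foxConjDerivation, ← hΔ_eq,
    mul_assoc (y.take i).prod, commutatorSubmodule.mk_mul_comm (y.take i).prod, mul_assoc]

theorem stmt8 (R : Type*) [CommRing R] (G : Type*) [Group G] (m : ℕ) (hm : 1 ≤ m)
    (D : Fin m → (MonoidAlgebra R G →ₗ[R] MonoidAlgebra R G))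
    (hFox : ∀ (i : Fin m) (x y : G),
      D i (MonoidAlgebra.of R G x * MonoidAlgebra.of R G y)
        = D i (MonoidAlgebra.of R G x) + MonoidAlgebra.of R G x * D i (MonoidAlgebra.of R G y))
    (Δ : Fin m → (MonoidAlgebra R G →ₗ[R] MonoidAlgebra R G))
    (hΔ : ∀ (i : Fin m) (x : G), Δ i (MonoidAlgebra.of R G x)
        = (D i (MonoidAlgebra.of R G x)).coeff.sum
            (fun a r => r • MonoidAlgebra.of R G (a⁻¹ * x * a)))
    (A' : Submodule R (MonoidAlgebra R G))
    (hA' : A' = Submodule.span R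
      {z : MonoidAlgebra R G | ∃ u v : MonoidAlgebra R G, z = u * v - v * u})
    (hvanish : ∀ (i : Fin m), ∀ a ∈ A', Δ i a = 0)
    (Δbar : Fin m → ((MonoidAlgebra R G ⧸ A') →ₗ[R] MonoidAlgebra R G))
    (hΔbar : ∀ (i : Fin m) (a : MonoidAlgebra R G),
      Δbar i (Submodule.Quotient.mk a) = Δ i a) :
    ∀ (i : Fin m) (x : Fin m → (MonoidAlgebra R G ⧸ A')),
      ∃ d : MonoidAlgebra R G →ₗ[R] MonoidAlgebra R G,
        (∀ u v : MonoidAlgebra R G, d (u * v) = d u * v + u * d v) ∧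
        ∀ a : MonoidAlgebra R G,
          (Submodule.Quotient.mk (d a) : MonoidAlgebra R G ⧸ A')
            = Submodule.Quotient.mk
                (List.ofFn (fun j =>
                  Δbar j (Function.update x i (Submodule.Quotient.mk a) j))).prod :=
  stmt8_general R G m D hFox Δ hΔ A' hA' Δbar hΔbar
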